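/- If an ordered field R satisfies the Constant Value Property—every function f : [a,b] → R continuous on [a,b] and differentiable on (a,b) with derivative identically 0 is constant on [a,b]—then R is Dedekind complete. -/

import Mathlib

/-- `f` has derivative `L` at `c`, in the ε-δ sense relative to the ordered field `R`. -/
def HasDerivAtField {R : Type*} [Field R] [LinearOrder R] [IsStrictOrderedRing R] (f : R → R) (L c : R) : Prop :=
  ∀ ε : R, 0 < ε → ∃ δ : R, 0 < δ ∧ ∀ x : R, x ≠ c → |x - c| < δ →
    |(f x - f c) / (x - c) - L| < ε

/-!
If a nonempty set `S` bounded above had no supremum, its set of upper bounds would be clopen: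
closed always, and open because every upper bound lies above a smaller one. Its indicator is then
locally constant, so it is continuous with derivative `0` everywhere, yet it is `1` at an upper
bound and `0` below a point of `S`, against the constant value property. In topological terms:
the constant value property makes `R` preconnected, and a preconnected linear order is Dedekind
complete.
-/

open Set Filter Topology

section Order

variable {α : Type*} [LinearOrder α] [TopologicalSpace α] [OrderTopology α]

theorem isClosed_upperBounds (S : Set α) : IsClosed (upperBounds S) := by
  have : upperBounds S = ⋂ s ∈ S, Ici s := by ext; simp [upperBounds]
  exact this ▸ isClosed_biInter fun _ _ => isClosed_Ici

theorem isOpen_upperBounds_of_forall_not_isLUB {S : Set α} (hS : ∀ c, ¬IsLUB S c) :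
    IsOpen (upperBounds S) := by
  refine isOpen_iff_mem_nhds.mpr fun c hc => ?_
  obtain ⟨u, hu, huc⟩ : ∃ u ∈ upperBounds S, u < c := by
    simpa [IsLUB, IsLeast, hc, lowerBounds] using hS c
  exact mem_of_superset (Ioi_mem_nhds huc) fun x hx => upperBounds_mono_mem (le_of_lt hx) hu

theorem exists_isLUB_of_preconnectedSpace [PreconnectedSpace α] {S : Set α} (hne : S.Nonempty)
    (hbdd : BddAbove S) : ∃ c, IsLUB S c := by
  by_contra! hS
  obtain ⟨s, hs⟩ := hne
  have hclopen : IsClopen (upperBounds S) :=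
    ⟨isClosed_upperBounds S, isOpen_upperBounds_of_forall_not_isLUB hS⟩
  rcases isClopen_iff.mp hclopen with hempty | huniv
  · exact hbdd.ne_empty hempty
  · exact hS s (IsGreatest.isLUB ⟨hs, huniv ▸ mem_univ s⟩)

end Order

section OrderedField

variable {R : Type*} [Field R] [LinearOrder R] [IsStrictOrderedRing R] [TopologicalSpace R]
  [OrderTopology R]

theorem hasDerivAtField_zero_of_eventually_eq {f : R → R} {c : R}
    (hf : ∀ᶠ x in 𝓝 c, f x = f c) : HasDerivAtField f 0 c := by
  obtain ⟨l, u, ⟨hlc, hcu⟩, hsub⟩ := mem_nhds_iff_exists_Ioo_subset.mp hf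
  intro ε hε
  refine ⟨min (c - l) (u - c), lt_min (sub_pos.mpr hlc) (sub_pos.mpr hcu), fun x _ hx => ?_⟩
  obtain ⟨hxl, hxu⟩ := abs_lt.mp (lt_of_lt_of_le hx (min_le_left _ _))
  have hx' := lt_of_abs_lt (lt_of_lt_of_le hx (min_le_right _ _))
  have hfx : f x = f c := hsub ⟨by linarith, by linarith⟩
  simpa [hfx] using hε

variable (R) in
def ConstantValueProperty : Prop :=
  ∀ (a b : R) (f : R → R), a < b → ContinuousOn f (Icc a b) →
    (∀ x ∈ Ioo a b, HasDerivAtField f 0 x) → ∀ x ∈ Icc a b, f x = f a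

theorem ConstantValueProperty.apply_eq_of_isLocallyConstant (hR : ConstantValueProperty R)
    {f : R → R} (hf : IsLocallyConstant f) (a b : R) : f a = f b := by
  rcases eq_or_ne a b with rfl | hab
  · rfl
  have hcst := hR (min a b) (max a b) f (min_lt_max.mpr hab) hf.continuous.continuousOn
    fun x _ => hasDerivAtField_zero_of_eventually_eq (hf.eventually_eq x)
  rw [hcst a ⟨min_le_left a b, le_max_left a b⟩, hcst b ⟨min_le_right a b, le_max_right a b⟩]

theorem ConstantValueProperty.preconnectedSpace (hR : ConstantValueProperty R) :
    PreconnectedSpace R := by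
  refine preconnectedSpace_iff_clopen.mpr fun U hU => ?_
  by_contra! ⟨⟨a, ha⟩, hU_ne_univ⟩
  obtain ⟨b, hb⟩ := ne_univ_iff_exists_notMem U |>.mp hU_ne_univ
  have hab := hR.apply_eq_of_isLocallyConstant (LocallyConstant.charFn R hU).isLocallyConstant a b
  simp [LocallyConstant.coe_charFn, ha, hb] at hab

end OrderedField

theorem constant_value_property_implies_dedekind_complete
    {R : Type*} [Field R] [LinearOrder R] [IsStrictOrderedRing R] [TopologicalSpace R] [OrderTopology R]
    (hcvp : ∀ (a b : R) (f : R → R), a < b → ContinuousOn f (Set.Icc a b) →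
      (∀ x ∈ Set.Ioo a b, HasDerivAtField f 0 x) →
      ∀ x ∈ Set.Icc a b, f x = f a) :
    ∀ S : Set R, S.Nonempty → BddAbove S → ∃ c : R, IsLUB S c := by
  have : PreconnectedSpace R := ConstantValueProperty.preconnectedSpace hcvp
  exact fun S => exists_isLUB_of_preconnectedSpace
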